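/- Let X be a separable nontrivial real or complex Banach space such that every P ∈ 𝒫(ᵏX : X) is a limit of strongly norm-attaining polynomials (e.g., X has the Radon–Nikodým property). Then n^(k)(X) = 1 if and only if |x*(x)| = 1 for every x ∈ ρ̃𝒫(ᵏX) and every weak-* exposed point x* of B_{X*}. -/

import Mathlib

open Metric Filter Topology Set

/-- The sup norm of a function over the closed unit ball. -/
noncomputable def supNorm {X Y : Type*} [NormedAddCommGroup X] [NormedAddCommGroup Y]
    (f : X → Y) : ℝ :=
  sSup ((fun x => ‖f x‖) '' Metric.closedBall (0 : X) 1)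

/-- `f` strongly attains its (sup) norm at `x₀`: every maximizing sequence in the closed unit
ball has a subsequence converging to a unimodular multiple of `x₀`. -/
def StronglyAttains (𝕂 : Type*) [RCLike 𝕂] {X Y : Type*} [NormedAddCommGroup X]
    [NormedSpace 𝕂 X] [NormedAddCommGroup Y] (f : X → Y) (x₀ : X) : Prop :=
  ∀ xs : ℕ → X, (∀ n, xs n ∈ Metric.closedBall (0 : X) 1) →
    Tendsto (fun n => ‖f (xs n)‖) atTop (nhds (supNorm f)) →
    ∃ (α : 𝕂) (φ : ℕ → ℕ), StrictMono φ ∧ ‖α‖ = 1 ∧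
      Tendsto (fun n => xs (φ n)) atTop (nhds (α • x₀))

/-- The `k`-homogeneous polynomial associated to a continuous `k`-multilinear map. -/
noncomputable def polyEval {𝕂 : Type*} [RCLike 𝕂] {X Y : Type*} [NormedAddCommGroup X]
    [NormedSpace 𝕂 X] [NormedAddCommGroup Y] [NormedSpace 𝕂 Y] {k : ℕ}
    (L : ContinuousMultilinearMap 𝕂 (fun _ : Fin k => X) Y) : X → Y :=
  fun x => L (fun _ => x)

/-- The set `ρ̃𝒫(ᵏX)` of points of the closed unit ball at which some nonzero bounded
`k`-homogeneous scalar polynomial strongly attains its norm. -/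
def polyAttainPts (𝕂 : Type*) [RCLike 𝕂] (X : Type*) [NormedAddCommGroup X]
    [NormedSpace 𝕂 X] (k : ℕ) : Set X :=
  {x₀ | x₀ ∈ Metric.closedBall (0 : X) 1 ∧
    ∃ L : ContinuousMultilinearMap 𝕂 (fun _ : Fin k => X) 𝕂,
      polyEval L ≠ 0 ∧ StronglyAttains 𝕂 (polyEval L) x₀}

/-- Numerical radius `v(f) = sup { |x*(f x)| : (x, x*) ∈ Π(X) }`. -/
noncomputable def numRadius (𝕂 : Type*) [RCLike 𝕂] {X : Type*} [NormedAddCommGroup X]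
    [NormedSpace 𝕂 X] (f : X → X) : ℝ :=
  sSup {r | ∃ (x : X) (x' : X →L[𝕂] 𝕂), ‖x‖ = 1 ∧ ‖x'‖ = 1 ∧ x' x = 1 ∧ r = ‖x' (f x)‖}

/-- The `k`-polynomial numerical index `n^(k)(X)`. -/
noncomputable def polyNumIndex (𝕂 : Type*) [RCLike 𝕂] (X : Type*) [NormedAddCommGroup X]
    [NormedSpace 𝕂 X] (k : ℕ) : ℝ :=
  sInf {r | ∃ L : ContinuousMultilinearMap 𝕂 (fun _ : Fin k => X) X,
    supNorm (polyEval L) = 1 ∧ r = numRadius 𝕂 (polyEval L)}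

/-- The numerical index `n(X)` of a Banach space. -/
noncomputable def numIndex (𝕂 : Type*) [RCLike 𝕂] (X : Type*) [NormedAddCommGroup X]
    [NormedSpace 𝕂 X] : ℝ :=
  sInf {r | ∃ T : X →L[𝕂] X, ‖T‖ = 1 ∧ r = numRadius 𝕂 (⇑T)}

/-- `x` is an extreme point of the convex set `s` : `y + z = 2x` with `y, z ∈ s` forces
`y = z = x`. -/
def IsExtremePt {E : Type*} [AddCommGroup E] (s : Set E) (x : E) : Prop :=
  x ∈ s ∧ ∀ y ∈ s, ∀ z ∈ s, y + z = x + x → y = x ∧ z = x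

/-- `x` is a strongly exposed point of the closed unit ball. -/
def StronglyExposedPt (𝕂 : Type*) [RCLike 𝕂] {X : Type*} [NormedAddCommGroup X]
    [NormedSpace 𝕂 X] (x : X) : Prop :=
  x ∈ Metric.closedBall (0 : X) 1 ∧ ∃ x' : X →L[𝕂] 𝕂, x' ≠ 0 ∧ ‖x'‖ ≤ 1 ∧
    (∀ y ∈ Metric.closedBall (0 : X) 1, RCLike.re (x' y) ≤ RCLike.re (x' x)) ∧
    ∀ xs : ℕ → X, (∀ n, xs n ∈ Metric.closedBall (0 : X) 1) →
      Tendsto (fun n => RCLike.re (x' (xs n))) atTop (nhds (RCLike.re (x' x))) →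
      Tendsto xs atTop (nhds x)

/-- `x'` is a weak-* exposed point of the dual unit ball. -/
def WeakStarExposed (𝕂 : Type*) [RCLike 𝕂] {X : Type*} [NormedAddCommGroup X]
    [NormedSpace 𝕂 X] (x' : X →L[𝕂] 𝕂) : Prop :=
  ‖x'‖ ≤ 1 ∧ ∃ x ∈ Metric.closedBall (0 : X) 1, x' x = 1 ∧
    ∀ y' : X →L[𝕂] 𝕂, ‖y'‖ ≤ 1 → y' x = 1 → y' = x'

/-- `f` is a strong peak function at `x₀`: `f` is nonzero on the ball and every maximizing
sequence in the closed unit ball converges to `x₀`. -/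
def StrongPeakAt {X Y : Type*} [NormedAddCommGroup X] [NormedAddCommGroup Y]
    (f : X → Y) (x₀ : X) : Prop :=
  (∃ x ∈ Metric.closedBall (0 : X) 1, f x ≠ 0) ∧
    ∀ xs : ℕ → X, (∀ n, xs n ∈ Metric.closedBall (0 : X) 1) →
      Tendsto (fun n => ‖f (xs n)‖) atTop (nhds (supNorm f)) →
      Tendsto xs atTop (nhds x₀)

/-- Complex extreme point of the closed unit ball. -/
def ComplexExtremePoint {X : Type*} [NormedAddCommGroup X] [NormedSpace ℂ X] (x : X) : Prop :=
  x ∈ Metric.closedBall (0 : X) 1 ∧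
    ∀ y : X, (∀ θ : ℝ, ‖x + Complex.exp (θ * Complex.I) • y‖ ≤ 1) → y = 0

/-- Membership in `A_b(B_X : Y)`: bounded, continuous on the closed unit ball and
holomorphic on the open unit ball. -/
def MemAb {X Y : Type*} [NormedAddCommGroup X] [NormedSpace ℂ X] [NormedAddCommGroup Y]
    [NormedSpace ℂ Y] (f : X → Y) : Prop :=
  ContinuousOn f (Metric.closedBall (0 : X) 1) ∧
    (∃ C, ∀ x ∈ Metric.closedBall (0 : X) 1, ‖f x‖ ≤ C) ∧
    DifferentiableOn ℂ f (Metric.ball (0 : X) 1)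

/-- Membership in `A_u(B_X : Y)`: additionally uniformly continuous on the closed ball. -/
def MemAu {X Y : Type*} [NormedAddCommGroup X] [NormedSpace ℂ X] [NormedAddCommGroup Y]
    [NormedSpace ℂ Y] (f : X → Y) : Prop :=
  MemAb f ∧ UniformContinuousOn f (Metric.closedBall (0 : X) 1)

/-- The set `ρA_u(B_X)` of strong peak points of `A_u(B_X)`. -/
def strongPeakPtsAu (X : Type*) [NormedAddCommGroup X] [NormedSpace ℂ X] : Set X :=
  {x₀ | ∃ f : X → ℂ, MemAu f ∧ StrongPeakAt f x₀}

/-- The holomorphic numerical index `n_u(X)`. -/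
noncomputable def holNumIndex (X : Type*) [NormedAddCommGroup X] [NormedSpace ℂ X] : ℝ :=
  sInf {r | ∃ f : X → X, MemAu f ∧ supNorm f = 1 ∧ r = numRadius ℂ f}

/-!
Smooth points are dense (Mazur). For a dense sequence of directions `v` and `ε > 0`, the points
at which the norm is `ε`-almost differentiable along `v` form an open set, dense because
`t ↦ ‖x + t v‖` is Lipschitz and hence differentiable almost everywhere; by Baire their
intersection is dense, and at its points the norming functional is unique. So every vector is
almost normed by a weak-* exposed functional.

(⇒) Let a scalar polynomial `p` strongly attain its norm at `x` and let `x*` be exposed by `z`.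
The polynomial `y ↦ (p y / ‖p‖) • z` has norm one, hence numerical radius one, so there are
states `(yₙ, yₙ*)` with `|p yₙ| → ‖p‖` and `|yₙ* z| → 1`. A subsequence of `yₙ` converges to a
rotation `w` of `x`, so also `|yₙ* w| → 1`, which forces `‖z + c w‖ = 2` for some unimodular `c`.
A functional norming `z + c w` norms both `z` and `c w`; it must be `x*`, so `|x* x| = 1`.

(⇐) Approximate `P` of norm one within `ε` by `Q` strongly attaining its norm at `x`; composing
`Q` with a functional norming `Q x` shows `x ∈ ρ̃𝒫(ᵏX)`. A weak-* exposed `x*` almost norming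
`P x` has `|x* x| = 1` by hypothesis, so after a rotation `(x, x*)` is a state and
`v(P) ≥ |x* (P x)| ≥ 1 - 3ε`.
-/

section SupNorm

variable {X Y : Type*} [NormedAddCommGroup X] [NormedAddCommGroup Y] {f g : X → Y}

lemma supNorm_nonneg (f : X → Y) : 0 ≤ supNorm f :=
  Real.sSup_nonneg (by rintro r ⟨x, -, rfl⟩; positivity)

lemma norm_le_supNorm (hb : BddAbove ((fun x => ‖f x‖) '' closedBall (0 : X) 1))
    {x : X} (hx : x ∈ closedBall (0 : X) 1) : ‖f x‖ ≤ supNorm f :=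
  le_csSup hb ⟨x, hx, rfl⟩

lemma supNorm_le {C : ℝ} (hC : 0 ≤ C) (h : ∀ x ∈ closedBall (0 : X) 1, ‖f x‖ ≤ C) :
    supNorm f ≤ C :=
  Real.sSup_le (by rintro r ⟨x, hx, rfl⟩; exact h x hx) hC

lemma supNorm_eq_of_norm_eq {C : ℝ} (h : ∀ x ∈ closedBall (0 : X) 1, ‖f x‖ ≤ C) {x₀ : X}
    (hx₀ : x₀ ∈ closedBall (0 : X) 1) (hfx₀ : ‖f x₀‖ = C) : supNorm f = C :=
  IsGreatest.csSup_eq ⟨⟨x₀, hx₀, hfx₀⟩, by rintro r ⟨x, hx, rfl⟩; exact h x hx⟩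

lemma supNorm_le_supNorm_add (hg : BddAbove ((fun x => ‖g x‖) '' closedBall (0 : X) 1))
    {ε : ℝ} (hε : 0 ≤ ε) (hfg : ∀ x ∈ closedBall (0 : X) 1, ‖f x - g x‖ ≤ ε) :
    supNorm f ≤ supNorm g + ε :=
  supNorm_le (add_nonneg (supNorm_nonneg g) hε) fun x hx => by
    linarith [norm_le_supNorm hg hx, hfg x hx, norm_sub_norm_le (f x) (g x)]

lemma exists_seq_tendsto_supNorm (hb : BddAbove ((fun x => ‖f x‖) '' closedBall (0 : X) 1)) :
    ∃ xs : ℕ → X, (∀ n, xs n ∈ closedBall (0 : X) 1) ∧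
      Tendsto (fun n => ‖f (xs n)‖) atTop (𝓝 (supNorm f)) := by
  obtain ⟨u, -, hu, hmem⟩ := exists_seq_tendsto_sSup
    (⟨‖f 0‖, 0, by simp, rfl⟩ : ((fun x => ‖f x‖) '' closedBall (0 : X) 1).Nonempty) hb
  choose xs hxs hfxs using hmem
  exact ⟨xs, hxs, by simpa only [hfxs, supNorm] using hu⟩

end SupNorm

section StronglyAttains

variable {𝕂 X Y : Type*} [RCLike 𝕂] [NormedAddCommGroup X] [NormedSpace 𝕂 X]
  [NormedAddCommGroup Y] {f : X → Y} {x₀ : X}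

lemma StronglyAttains.smul (h : StronglyAttains 𝕂 f x₀) {α : 𝕂} (hα : ‖α‖ = 1) :
    StronglyAttains 𝕂 f (α • x₀) := by
  intro xs hxs hmax
  obtain ⟨β, φ, hφ, hβ, hlim⟩ := h xs hxs hmax
  have hα₀ : α ≠ 0 := norm_ne_zero_iff.mp (by rw [hα]; exact one_ne_zero)
  refine ⟨β * α⁻¹, φ, hφ, by rw [norm_mul, norm_inv, hα, hβ, inv_one, one_mul], ?_⟩
  rwa [smul_smul, mul_assoc, inv_mul_cancel₀ hα₀, mul_one]

lemma StronglyAttains.exists_norm_eq_supNorm (h : StronglyAttains 𝕂 f x₀) (hf : Continuous f)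
    (hb : BddAbove ((fun x => ‖f x‖) '' closedBall (0 : X) 1)) :
    ∃ α : 𝕂, ‖α‖ = 1 ∧ α • x₀ ∈ closedBall (0 : X) 1 ∧ ‖f (α • x₀)‖ = supNorm f := by
  obtain ⟨xs, hxs, hmax⟩ := exists_seq_tendsto_supNorm hb
  obtain ⟨α, φ, hφ, hα, hlim⟩ := h xs hxs hmax
  refine ⟨α, hα, isClosed_closedBall.mem_of_tendsto hlim (.of_forall fun n => hxs (φ n)), ?_⟩
  exact tendsto_nhds_unique ((hf.tendsto _).comp hlim).norm (hmax.comp hφ.tendsto_atTop)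

lemma StronglyAttains.of_norm_le {Z : Type*} [NormedAddCommGroup Z] {g : X → Z}
    (h : StronglyAttains 𝕂 f x₀)
    (hb : BddAbove ((fun x => ‖f x‖) '' closedBall (0 : X) 1))
    (hgf : ∀ x ∈ closedBall (0 : X) 1, ‖g x‖ ≤ ‖f x‖) (hsup : supNorm g = supNorm f) :
    StronglyAttains 𝕂 g x₀ := fun xs hxs hmax =>
  h xs hxs <| tendsto_of_tendsto_of_tendsto_of_le_of_le (hsup ▸ hmax) tendsto_const_nhds
    (fun n => hgf _ (hxs n)) (fun n => norm_le_supNorm hb (hxs n))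

end StronglyAttains

section Polynomial

variable {𝕂 X Y : Type*} [RCLike 𝕂] [NormedAddCommGroup X] [NormedSpace 𝕂 X]
  [NormedAddCommGroup Y] [NormedSpace 𝕂 Y] {k : ℕ}
  (L : ContinuousMultilinearMap 𝕂 (fun _ : Fin k => X) Y)

lemma continuous_polyEval : Continuous (polyEval L) :=
  L.coe_continuous.comp (continuous_pi fun _ => continuous_id)

lemma bddAbove_norm_polyEval :
    BddAbove ((fun x => ‖polyEval L x‖) '' closedBall (0 : X) 1) := by
  refine ⟨‖L‖, ?_⟩
  rintro r ⟨x, hx, rfl⟩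
  calc ‖polyEval L x‖ ≤ ‖L‖ * ∏ _i : Fin k, ‖x‖ := L.le_opNorm _
    _ ≤ ‖L‖ * 1 := by
        gcongr
        exact Finset.prod_le_one (fun _ _ => norm_nonneg _) fun _ _ => mem_closedBall_zero_iff.mp hx
    _ = ‖L‖ := mul_one _

lemma polyEval_smul (c : 𝕂) (x : X) : polyEval L (c • x) = c ^ k • polyEval L x := by
  simpa [polyEval, Finset.prod_const] using L.map_smul_univ (fun _ => c) (fun _ => x)

lemma supNorm_polyEval_pos (hL : polyEval L ≠ 0) : 0 < supNorm (polyEval L) := by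
  obtain ⟨w, hw⟩ := Function.ne_iff.mp hL
  set c : 𝕂 := (((‖w‖ + 1)⁻¹ : ℝ) : 𝕂)
  have hc : c ≠ 0 := RCLike.ofReal_ne_zero.mpr (by positivity)
  have hcw : c • w ∈ closedBall (0 : X) 1 := by
    rw [mem_closedBall_zero_iff, norm_smul, RCLike.norm_ofReal, abs_of_pos (by positivity),
      inv_mul_le_one₀ (by positivity)]
    linarith
  calc 0 < ‖polyEval L (c • w)‖ := by
        rw [polyEval_smul]
        exact norm_pos_iff.mpr (smul_ne_zero (pow_ne_zero _ hc) hw)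
    _ ≤ supNorm (polyEval L) := norm_le_supNorm (bddAbove_norm_polyEval L) hcw

end Polynomial

section NumRadius

variable {𝕂 X : Type*} [RCLike 𝕂] [NormedAddCommGroup X] [NormedSpace 𝕂 X] {f : X → X}

lemma norm_eq_one_of_norm_apply_eq_one {x : X} {x' : X →L[𝕂] 𝕂} (hx : ‖x‖ ≤ 1)
    (hx' : ‖x'‖ ≤ 1) (h : ‖x' x‖ = 1) : ‖x‖ = 1 ∧ ‖x'‖ = 1 := by
  have := x'.le_opNorm x
  constructor <;> nlinarith [norm_nonneg x, norm_nonneg x']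

variable (𝕂 X) in
lemma exists_norm_eq_one_apply_eq_one [Nontrivial X] :
    ∃ (x : X) (x' : X →L[𝕂] 𝕂), ‖x‖ = 1 ∧ ‖x'‖ = 1 ∧ x' x = 1 := by
  obtain ⟨e, he⟩ := exists_ne (0 : X)
  have hx := norm_smul_inv_norm (𝕜 := 𝕂) he
  obtain ⟨x', hx', hx'x⟩ := exists_dual_vector 𝕂 _ (hx.trans_ne one_ne_zero)
  exact ⟨_, x', hx, hx', by rw [hx'x, hx, RCLike.ofReal_one]⟩

lemma numRadius_nonneg (f : X → X) : 0 ≤ numRadius 𝕂 f :=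
  Real.sSup_nonneg (by rintro t ⟨y, y', -, -, -, rfl⟩; positivity)

lemma norm_apply_apply_le_supNorm (hb : BddAbove ((fun x => ‖f x‖) '' closedBall (0 : X) 1))
    {x : X} {x' : X →L[𝕂] 𝕂} (hx : ‖x‖ ≤ 1) (hx' : ‖x'‖ ≤ 1) : ‖x' (f x)‖ ≤ supNorm f :=
  calc ‖x' (f x)‖ ≤ ‖x'‖ * ‖f x‖ := x'.le_opNorm _
    _ ≤ 1 * supNorm f := by
        gcongr
        exact norm_le_supNorm hb (mem_closedBall_zero_iff.mpr hx)
    _ = supNorm f := one_mul _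

lemma bddAbove_numRadiusSet (hb : BddAbove ((fun x => ‖f x‖) '' closedBall (0 : X) 1)) :
    BddAbove {r | ∃ (x : X) (x' : X →L[𝕂] 𝕂), ‖x‖ = 1 ∧ ‖x'‖ = 1 ∧ x' x = 1 ∧
      r = ‖x' (f x)‖} :=
  ⟨supNorm f, by
    rintro r ⟨x, x', hx, hx', -, rfl⟩
    exact norm_apply_apply_le_supNorm hb hx.le hx'.le⟩

lemma numRadius_le_supNorm (hb : BddAbove ((fun x => ‖f x‖) '' closedBall (0 : X) 1)) :
    numRadius 𝕂 f ≤ supNorm f :=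
  Real.sSup_le (fun _ ⟨_, _, hx, hx', _, hr⟩ => hr ▸ norm_apply_apply_le_supNorm hb hx.le hx'.le)
    (supNorm_nonneg f)

lemma norm_apply_le_numRadius (hb : BddAbove ((fun x => ‖f x‖) '' closedBall (0 : X) 1))
    {x : X} {x' : X →L[𝕂] 𝕂} (hx : ‖x‖ ≤ 1) (hx' : ‖x'‖ ≤ 1) (h : ‖x' x‖ = 1) :
    ‖x' (f x)‖ ≤ numRadius 𝕂 f := by
  obtain ⟨hx1, hx'1⟩ := norm_eq_one_of_norm_apply_eq_one hx hx' h
  have hxx' : x' x ≠ 0 := norm_ne_zero_iff.mp (by rw [h]; exact one_ne_zero)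
  -- Rotating `x'` by the unimodular scalar `x' x` turns `(x, x')` into a state.
  set y' : X →L[𝕂] 𝕂 := (x' x)⁻¹ • x'
  have hy' : ∀ w, ‖y' w‖ = ‖x' w‖ := fun w => by
    rw [smul_apply, smul_eq_mul, norm_mul, norm_inv, h, inv_one, one_mul]
  have hy'1 : ‖y'‖ = 1 := by
    rw [norm_smul, norm_inv, h, inv_one, one_mul, hx'1]
  refine le_csSup (bddAbove_numRadiusSet hb) ⟨x, y', hx1, hy'1, ?_, (hy' _).symm⟩
  rw [smul_apply, smul_eq_mul, inv_mul_cancel₀ hxx']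

lemma exists_seq_tendsto_numRadius [Nontrivial X]
    (hb : BddAbove ((fun x => ‖f x‖) '' closedBall (0 : X) 1)) :
    ∃ (xs : ℕ → X) (gs : ℕ → X →L[𝕂] 𝕂), (∀ n, ‖xs n‖ = 1 ∧ ‖gs n‖ = 1 ∧ gs n (xs n) = 1) ∧
      Tendsto (fun n => ‖gs n (f (xs n))‖) atTop (𝓝 (numRadius 𝕂 f)) := by
  obtain ⟨e, g, he, hg, hge⟩ := exists_norm_eq_one_apply_eq_one 𝕂 X
  have hne : {r | ∃ (x : X) (x' : X →L[𝕂] 𝕂), ‖x‖ = 1 ∧ ‖x'‖ = 1 ∧ x' x = 1 ∧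
      r = ‖x' (f x)‖}.Nonempty := ⟨_, e, g, he, hg, hge, rfl⟩
  obtain ⟨u, -, hu, hmem⟩ := exists_seq_tendsto_sSup hne (bddAbove_numRadiusSet hb)
  choose xs gs hxs hgs hgxs hu_eq using hmem
  exact ⟨xs, gs, fun n => ⟨hxs n, hgs n, hgxs n⟩, by simpa only [← hu_eq, numRadius] using hu⟩

end NumRadius

section PolyNumIndex

variable {𝕂 X : Type*} [RCLike 𝕂] [NormedAddCommGroup X] [NormedSpace 𝕂 X] [Nontrivial X]
  {k : ℕ}

variable (𝕂 X) in
lemma exists_supNorm_polyEval_eq_one (k : ℕ) :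
    ∃ L : ContinuousMultilinearMap 𝕂 (fun _ : Fin k => X) X, supNorm (polyEval L) = 1 := by
  obtain ⟨e, g, he, hg, hge⟩ := exists_norm_eq_one_apply_eq_one 𝕂 X
  set L := ((ContinuousMultilinearMap.mkPiAlgebra 𝕂 (Fin k) 𝕂).compContinuousLinearMap
    fun _ => g).smulRight e
  have hL : ∀ x, ‖polyEval L x‖ = ‖g x‖ ^ k := fun x => by
    simp [L, polyEval, norm_smul, he, Finset.prod_const]
  refine ⟨L, supNorm_eq_of_norm_eq (fun x hx => ?_) (mem_closedBall_zero_iff.mpr he.le)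
    (by rw [hL, hge, norm_one, one_pow])⟩
  rw [hL]
  refine pow_le_one₀ (norm_nonneg _) ((g.le_opNorm x).trans ?_)
  rw [hg, one_mul]
  exact mem_closedBall_zero_iff.mp hx

lemma polyNumIndex_eq_one_iff :
    polyNumIndex 𝕂 X k = 1 ↔ ∀ L : ContinuousMultilinearMap 𝕂 (fun _ : Fin k => X) X,
      supNorm (polyEval L) = 1 → 1 ≤ numRadius 𝕂 (polyEval L) := by
  have hbdd : BddBelow {r | ∃ L : ContinuousMultilinearMap 𝕂 (fun _ : Fin k => X) X,
      supNorm (polyEval L) = 1 ∧ r = numRadius 𝕂 (polyEval L)} :=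
    ⟨0, by rintro r ⟨L, -, rfl⟩; exact numRadius_nonneg _⟩
  obtain ⟨L₁, hL₁⟩ := exists_supNorm_polyEval_eq_one 𝕂 X k
  refine ⟨fun h L hL => h ▸ csInf_le hbdd ⟨L, hL, rfl⟩, fun h => le_antisymm ?_ ?_⟩
  · exact (csInf_le hbdd ⟨L₁, hL₁, rfl⟩).trans
      (hL₁ ▸ numRadius_le_supNorm (bddAbove_norm_polyEval L₁))
  · exact le_csInf ⟨_, L₁, hL₁, rfl⟩ (by rintro r ⟨L, hL, rfl⟩; exact h L hL)

end PolyNumIndex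

lemma HasDerivAt.exists_pos_add_add_sub_lt {φ : ℝ → ℝ} {φ' t : ℝ} (h : HasDerivAt φ φ' t)
    {ε : ℝ} (hε : 0 < ε) : ∃ δ > 0, φ (t + δ) + φ (t - δ) - 2 * φ t < ε * δ := by
  have hleft : Tendsto (fun δ => (-δ)⁻¹ * (φ (t + -δ) - φ t)) (𝓝[>] 0) (𝓝 φ') := by
    have := h.tendsto_slope_zero_left.comp (tendsto_neg_nhdsGT_neg (a := (0 : ℝ)))
    rwa [neg_zero] at this
  have hsymm : Tendsto (fun δ => δ⁻¹ * (φ (t + δ) + φ (t - δ) - 2 * φ t)) (𝓝[>] 0) (𝓝 0) := by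
    refine (sub_self φ' ▸ h.tendsto_slope_zero_right.sub hleft).congr fun δ => ?_
    simp only [smul_eq_mul, inv_neg, neg_mul, ← sub_eq_add_neg]
    ring
  obtain ⟨δ, hδ, hδpos⟩ :=
    ((hsymm.eventually (gt_mem_nhds hε)).and self_mem_nhdsWithin).exists
  exact ⟨δ, hδpos, by rw [inv_mul_lt_iff₀ hδpos] at hδ; linarith⟩

section SmoothPoints

variable {𝕂 X : Type*} [RCLike 𝕂] [NormedAddCommGroup X] [NormedSpace 𝕂 X]

/-- Points at which the norm is, at some scale, `ε`-close to being differentiable along `v`. -/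
def almostSmoothSet (𝕂 : Type*) [RCLike 𝕂] {X : Type*} [NormedAddCommGroup X]
    [NormedSpace 𝕂 X] (v : X) (ε : ℝ) : Set X :=
  {x | ∃ δ > (0 : ℝ), ‖x + (δ : 𝕂) • v‖ + ‖x - (δ : 𝕂) • v‖ - 2 * ‖x‖ < ε * δ}

lemma isOpen_almostSmoothSet (v : X) (ε : ℝ) : IsOpen (almostSmoothSet 𝕂 v ε) := by
  have : almostSmoothSet 𝕂 v ε = ⋃ δ ∈ Ioi (0 : ℝ),
      {x : X | ‖x + (δ : 𝕂) • v‖ + ‖x - (δ : 𝕂) • v‖ - 2 * ‖x‖ < ε * δ} := by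
    ext; simp [almostSmoothSet]
  rw [this]
  exact isOpen_biUnion fun δ _ => isOpen_lt (by fun_prop) continuous_const

lemma dense_almostSmoothSet (v : X) {ε : ℝ} (hε : 0 < ε) : Dense (almostSmoothSet 𝕂 v ε) := by
  refine Metric.dense_iff.mpr fun x₀ r hr => ?_
  set φ : ℝ → ℝ := fun t => ‖x₀ + (t : 𝕂) • v‖
  have hφ : LipschitzWith ‖v‖₊ φ := LipschitzWith.of_dist_le_mul fun s t => by
    simp only [φ, Real.dist_eq, coe_nnnorm]
    refine (abs_norm_sub_norm_le _ _).trans_eq ?_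
    rw [add_sub_add_left_eq_sub, ← sub_smul, norm_smul, ← RCLike.ofReal_sub, RCLike.norm_ofReal,
      mul_comm]
  obtain ⟨t, ht, htφ⟩ := Metric.dense_iff.mp
    (MeasureTheory.Measure.dense_of_ae hφ.ae_differentiableAt_real) 0 (r / (‖v‖ + 1))
    (by positivity)
  obtain ⟨δ, hδ, hlt⟩ := htφ.hasDerivAt.exists_pos_add_add_sub_lt hε
  refine ⟨x₀ + (t : 𝕂) • v, ?_, δ, hδ, ?_⟩
  · rw [mem_ball_zero_iff, Real.norm_eq_abs, lt_div_iff₀ (by positivity)] at ht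
    rw [mem_ball, dist_eq_norm, add_sub_cancel_left, norm_smul, RCLike.norm_ofReal]
    nlinarith [abs_nonneg t, norm_nonneg v]
  · convert hlt using 3 <;> simp only [φ, RCLike.ofReal_add, RCLike.ofReal_sub, add_smul, sub_smul,
      add_assoc, add_sub_assoc]

lemma ContinuousLinearMap.re_apply_le_norm {f : X →L[𝕂] 𝕂} (hf : ‖f‖ ≤ 1) (x : X) :
    RCLike.re (f x) ≤ ‖x‖ :=
  (RCLike.re_le_norm _).trans ((f.le_opNorm x).trans (mul_le_of_le_one_left (norm_nonneg x) hf))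

lemma re_sub_re_lt_of_mem_almostSmoothSet {v x : X} {ε : ℝ} (hx : x ∈ almostSmoothSet 𝕂 v ε)
    {f g : X →L[𝕂] 𝕂} (hf : ‖f‖ ≤ 1) (hg : ‖g‖ ≤ 1) (hfx : f x = ‖x‖) (hgx : g x = ‖x‖) :
    RCLike.re (f v) - RCLike.re (g v) < ε := by
  obtain ⟨δ, hδ, hlt⟩ := hx
  have h₁ := f.re_apply_le_norm hf (x + (δ : 𝕂) • v)
  have h₂ := g.re_apply_le_norm hg (x - (δ : 𝕂) • v)
  simp only [map_add, map_sub, map_smul, smul_eq_mul, hfx, hgx, RCLike.ofReal_re,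
    RCLike.re_ofReal_mul] at h₁ h₂
  nlinarith

lemma ContinuousLinearMap.eq_of_forall_re_le {f g : X →L[𝕂] 𝕂}
    (h : ∀ w, RCLike.re (f w) ≤ RCLike.re (g w)) : f = g := by
  have hre : ∀ w, RCLike.re (f w) = RCLike.re (g w) := fun w =>
    le_antisymm (h w) (by simpa using h (-w))
  ext w
  refine RCLike.ext (hre w) ?_
  simpa [RCLike.I_mul_re] using hre ((RCLike.I : 𝕂) • w)

variable (𝕂 X) in
/-- Mazur's theorem: in a separable Banach space the smooth points are dense. -/
lemma dense_setOf_norming_unique [CompleteSpace X] [TopologicalSpace.SeparableSpace X] :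
    Dense {x : X | ∀ f g : X →L[𝕂] 𝕂, ‖f‖ ≤ 1 → ‖g‖ ≤ 1 → f x = ‖x‖ → g x = ‖x‖ → f = g} := by
  obtain ⟨v, hv⟩ := TopologicalSpace.exists_dense_seq X
  refine (dense_iInter_of_isOpen
    (f := fun p : ℕ × ℕ => almostSmoothSet 𝕂 (v p.1) (1 / (p.2 + 1)))
    (fun _ => isOpen_almostSmoothSet _ _)
    (fun _ => dense_almostSmoothSet _ Nat.one_div_pos_of_nat)).mono ?_
  intro x hx f g hf hg hfx hgx
  refine ContinuousLinearMap.eq_of_forall_re_le fun w => hv.induction_on w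
    (isClosed_le (by fun_prop) (by fun_prop)) fun n => ?_
  refine sub_nonpos.mp (le_of_not_gt fun hpos => ?_)
  obtain ⟨m, hm⟩ := exists_nat_one_div_lt hpos
  exact (re_sub_re_lt_of_mem_almostSmoothSet (mem_iInter.mp hx (n, m)) hf hg hfx hgx).not_gt hm

lemma exists_weakStarExposed_norm_apply_ge [CompleteSpace X]
    [TopologicalSpace.SeparableSpace X] {u : X} (hu : u ≠ 0) {η : ℝ} (hη : 0 < η) :
    ∃ x' : X →L[𝕂] 𝕂, WeakStarExposed 𝕂 x' ∧ ‖u‖ - η ≤ ‖x' u‖ := by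
  obtain ⟨x, hxu, hx⟩ := Metric.dense_iff.mp (dense_setOf_norming_unique 𝕂 X) u
    (min (η / 2) ‖u‖) (lt_min (half_pos hη) (norm_pos_iff.mpr hu))
  rw [mem_ball, dist_eq_norm, lt_min_iff] at hxu
  have hx0 : x ≠ 0 := by rintro rfl; simp at hxu
  obtain ⟨f, hf, hfx⟩ := exists_dual_vector 𝕂 x (norm_ne_zero_iff.mpr hx0)
  have hs := norm_smul_inv_norm (𝕜 := 𝕂) hx0
  have hx_eq : x = (‖x‖ : 𝕂) • ((‖x‖⁻¹ : 𝕂) • x) := by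
    rw [smul_smul, mul_inv_cancel₀ (by exact_mod_cast norm_ne_zero_iff.mpr hx0), one_smul]
  have hfs : f ((‖x‖⁻¹ : 𝕂) • x) = 1 := by
    rw [map_smul, smul_eq_mul, hfx, inv_mul_cancel₀ (by exact_mod_cast norm_ne_zero_iff.mpr hx0)]
  refine ⟨f, ⟨hf.le, _, mem_closedBall_zero_iff.mpr hs.le, hfs, fun g hg hgs => ?_⟩, ?_⟩
  · refine hx g f hg hf.le ?_ hfx
    rw [hx_eq, map_smul, hgs, smul_eq_mul, mul_one, ← hx_eq]
  · have hfxu : ‖f x - f u‖ ≤ ‖x - u‖ := by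
      rw [← map_sub]
      exact (f.le_opNorm _).trans_eq (by rw [hf, one_mul])
    have hfx' : ‖f x‖ = ‖x‖ := by rw [hfx, RCLike.norm_ofReal, abs_norm]
    linarith [norm_sub_norm_le (f x) (f u), norm_sub_norm_le u x, norm_sub_rev u x]

end SmoothPoints

section Scalars

variable {𝕂 : Type*} [RCLike 𝕂]

lemma RCLike.exists_norm_eq_one_mul_eq_norm (a : 𝕂) : ∃ u : 𝕂, ‖u‖ = 1 ∧ u * a = ‖a‖ := by
  rcases eq_or_ne a 0 with rfl | ha
  · exact ⟨1, norm_one, by simp⟩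
  have ha' : (‖a‖ : 𝕂) ≠ 0 := RCLike.ofReal_ne_zero.mpr (norm_ne_zero_iff.mpr ha)
  refine ⟨starRingEnd 𝕂 a / ‖a‖, ?_, ?_⟩
  · rw [norm_div, RCLike.norm_conj, RCLike.norm_ofReal, abs_norm,
      div_self (norm_ne_zero_iff.mpr ha)]
  · rw [div_mul_eq_mul_div, RCLike.conj_mul, div_eq_iff ha']
    ring

lemma RCLike.eq_one_of_norm_le_one_of_re_eq_one {z : 𝕂} (hz : ‖z‖ ≤ 1) (hre : RCLike.re z = 1) :
    z = 1 := by
  have h := RCLike.norm_sq_eq_def (z := z)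
  have him : RCLike.im z = 0 := by nlinarith [norm_nonneg z]
  exact RCLike.ext (by simp [hre]) (by simp [him])

lemma tendsto_of_tendsto_mul_of_le_one {a b : ℕ → ℝ} (ha0 : ∀ n, 0 ≤ a n) (ha : ∀ n, a n ≤ 1)
    (hb : ∀ n, b n ≤ 1) (hab : Tendsto (fun n => a n * b n) atTop (𝓝 1)) :
    Tendsto a atTop (𝓝 1) :=
  tendsto_of_tendsto_of_tendsto_of_le_of_le hab tendsto_const_nhds
    (fun n => mul_le_of_le_one_right (ha0 n) (hb n)) ha

end Scalars

section Forward

variable {𝕂 X : Type*} [RCLike 𝕂] [NormedAddCommGroup X] [NormedSpace 𝕂 X]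

lemma exists_norm_add_smul_ge_two (z w : X) {g : ℕ → X →L[𝕂] 𝕂} (hg : ∀ n, ‖g n‖ ≤ 1)
    (hz : Tendsto (fun n => ‖g n z‖) atTop (𝓝 1)) (hw : Tendsto (fun n => ‖g n w‖) atTop (𝓝 1)) :
    ∃ c : 𝕂, ‖c‖ = 1 ∧ 2 ≤ ‖z + c • w‖ := by
  obtain ⟨c, hc, hmax⟩ := (isCompact_sphere (0 : 𝕂) 1).exists_isMaxOn
    (NormedSpace.sphere_nonempty.mpr zero_le_one)
    (by fun_prop : Continuous fun c : 𝕂 => ‖z + c • w‖).continuousOn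
  refine ⟨c, mem_sphere_zero_iff_norm.mp hc,
    le_of_tendsto' (by simpa [one_add_one_eq_two] using hz.add hw) fun n => ?_⟩
  obtain ⟨a, ha, haz⟩ := RCLike.exists_norm_eq_one_mul_eq_norm (g n z)
  obtain ⟨b, hb, hbw⟩ := RCLike.exists_norm_eq_one_mul_eq_norm (g n w)
  have ha0 : a ≠ 0 := norm_ne_zero_iff.mp (ha.trans_ne one_ne_zero)
  -- Rotating `w` by `b / a` aligns the phases of `g n z` and `g n w`.
  have hab : a * g n (z + (b / a) • w) = ((‖g n z‖ + ‖g n w‖ : ℝ) : 𝕂) := by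
    rw [map_add, map_smul, smul_eq_mul, mul_add, ← mul_assoc, mul_div_cancel₀ _ ha0, haz, hbw,
      RCLike.ofReal_add]
  calc ‖g n z‖ + ‖g n w‖ = ‖a * g n (z + (b / a) • w)‖ := by
        rw [hab, RCLike.norm_ofReal, abs_of_nonneg (by positivity)]
    _ ≤ ‖z + (b / a) • w‖ := by
        rw [norm_mul, ha, one_mul]
        exact (g n).le_opNorm _ |>.trans (mul_le_of_le_one_left (norm_nonneg _) (hg n))
    _ ≤ ‖z + c • w‖ := hmax (mem_sphere_zero_iff_norm.mpr (by rw [norm_div, ha, hb, div_one]))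

lemma exists_apply_eq_one_of_two_le_norm_add {a b : X} (ha : ‖a‖ ≤ 1) (hb : ‖b‖ ≤ 1)
    (hab : 2 ≤ ‖a + b‖) : ∃ g : X →L[𝕂] 𝕂, ‖g‖ = 1 ∧ g a = 1 ∧ g b = 1 := by
  obtain ⟨g, hg, hgab⟩ := exists_dual_vector 𝕂 (a + b) (by linarith [norm_nonneg (a + b)])
  have hre := congrArg RCLike.re hgab
  rw [map_add, map_add, RCLike.ofReal_re] at hre
  have hga := g.re_apply_le_norm hg.le a
  have hgb := g.re_apply_le_norm hg.le b
  have hnorm := norm_add_le a b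
  have hna : ‖g a‖ ≤ 1 := (g.le_opNorm a).trans (by rwa [hg, one_mul])
  have hnb : ‖g b‖ ≤ 1 := (g.le_opNorm b).trans (by rwa [hg, one_mul])
  exact ⟨g, hg, RCLike.eq_one_of_norm_le_one_of_re_eq_one hna (by linarith),
    RCLike.eq_one_of_norm_le_one_of_re_eq_one hnb (by linarith)⟩

variable {k : ℕ}

lemma exists_supNorm_eq_one_norm_apply_polyEval_eq
    {L : ContinuousMultilinearMap 𝕂 (fun _ : Fin k => X) 𝕂} (hL : polyEval L ≠ 0) {x : X}
    (hLx : StronglyAttains 𝕂 (polyEval L) x) {z : X} (hz : ‖z‖ = 1) :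
    ∃ P : ContinuousMultilinearMap 𝕂 (fun _ : Fin k => X) X, supNorm (polyEval P) = 1 ∧
      ∀ (y : X) (g : X →L[𝕂] 𝕂),
        ‖g (polyEval P y)‖ = (supNorm (polyEval L))⁻¹ * ‖polyEval L y‖ * ‖g z‖ := by
  set M := supNorm (polyEval L)
  have hM : 0 < M := supNorm_polyEval_pos L hL
  set P := (((M⁻¹ : ℝ) : 𝕂) • L).smulRight z
  have hP : ∀ y, polyEval P y = (((M⁻¹ : ℝ) : 𝕂) * polyEval L y) • z := fun _ => rfl
  have hM' : ‖((M⁻¹ : ℝ) : 𝕂)‖ = M⁻¹ := by rw [RCLike.norm_ofReal, abs_of_pos (inv_pos.mpr hM)]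
  have hPnorm : ∀ y, ‖polyEval P y‖ = M⁻¹ * ‖polyEval L y‖ := fun y => by
    rw [hP, norm_smul, hz, mul_one, norm_mul, hM']
  obtain ⟨α, -, hαx, hLα⟩ :=
    hLx.exists_norm_eq_supNorm (continuous_polyEval L) (bddAbove_norm_polyEval L)
  refine ⟨P, supNorm_eq_of_norm_eq (fun y hy => ?_) hαx ?_, fun y g => ?_⟩
  · rw [hPnorm]
    exact inv_mul_le_one_of_le₀ (norm_le_supNorm (bddAbove_norm_polyEval L) hy) hM.le
  · rw [hPnorm, hLα, inv_mul_cancel₀ hM.ne']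
  · rw [hP, map_smul, smul_eq_mul, norm_mul, norm_mul, hM']

variable [Nontrivial X]

lemma exists_seq_norm_apply_tendsto_one
    (hind : ∀ P : ContinuousMultilinearMap 𝕂 (fun _ : Fin k => X) X,
      supNorm (polyEval P) = 1 → 1 ≤ numRadius 𝕂 (polyEval P))
    {L : ContinuousMultilinearMap 𝕂 (fun _ : Fin k => X) 𝕂} (hL : polyEval L ≠ 0) {x : X}
    (hLx : StronglyAttains 𝕂 (polyEval L) x) {z : X} (hz : ‖z‖ = 1) :
    ∃ β : 𝕂, ‖β‖ = 1 ∧ ∃ g : ℕ → X →L[𝕂] 𝕂, (∀ n, ‖g n‖ ≤ 1) ∧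
      Tendsto (fun n => ‖g n z‖) atTop (𝓝 1) ∧ Tendsto (fun n => ‖g n (β • x)‖) atTop (𝓝 1) := by
  set M := supNorm (polyEval L)
  have hM : 0 < M := supNorm_polyEval_pos L hL
  obtain ⟨P, hsupP, hP⟩ := exists_supNorm_eq_one_norm_apply_polyEval_eq hL hLx hz
  have hbP := bddAbove_norm_polyEval P
  have hvP : numRadius 𝕂 (polyEval P) = 1 :=
    le_antisymm (hsupP ▸ numRadius_le_supNorm hbP) (hind P hsupP)
  obtain ⟨ys, gs, hpair, hlim⟩ := exists_seq_tendsto_numRadius (𝕂 := 𝕂) hbP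
  have hys : ∀ n, ys n ∈ closedBall (0 : X) 1 := fun n =>
    mem_closedBall_zero_iff.mpr (hpair n).1.le
  have hgs : ∀ n, ‖gs n‖ ≤ 1 := fun n => (hpair n).2.1.le
  have hgz : ∀ n, ‖gs n z‖ ≤ 1 := fun n =>
    ((gs n).le_opNorm z).trans (by rw [(hpair n).2.1, hz, one_mul])
  have hLy : ∀ n, M⁻¹ * ‖polyEval L (ys n)‖ ≤ 1 := fun n =>
    inv_mul_le_one_of_le₀ (norm_le_supNorm (bddAbove_norm_polyEval L) (hys n)) hM.le
  have hprod : Tendsto (fun n => M⁻¹ * ‖polyEval L (ys n)‖ * ‖gs n z‖) atTop (𝓝 1) :=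
    hvP ▸ hlim.congr fun n => hP _ _
  have hLmax : Tendsto (fun n => ‖polyEval L (ys n)‖) atTop (𝓝 M) := by
    have := (tendsto_of_tendsto_mul_of_le_one (fun n => by positivity) hLy hgz hprod).const_mul M
    simpa [← mul_assoc, mul_inv_cancel₀ hM.ne'] using this
  obtain ⟨β, φ, hφ, hβ, hconv⟩ := hLx ys hys hLmax
  refine ⟨β, hβ, gs ∘ φ, fun n => hgs (φ n), ?_, ?_⟩
  · refine (tendsto_of_tendsto_mul_of_le_one (fun n => norm_nonneg _) hgz hLy ?_).comp
      hφ.tendsto_atTop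
    simpa only [mul_comm] using hprod
  · have : Tendsto (fun n => gs (φ n) (β • x)) atTop (𝓝 1) := by
      rw [tendsto_iff_norm_sub_tendsto_zero]
      refine squeeze_zero (fun n => norm_nonneg _) (fun n => ?_)
        (tendsto_iff_norm_sub_tendsto_zero.mp hconv)
      rw [← (hpair (φ n)).2.2, ← map_sub, norm_sub_rev]
      exact ((gs (φ n)).le_opNorm _).trans (mul_le_of_le_one_left (norm_nonneg _) (hgs _))
    simpa using this.norm

lemma norm_apply_eq_one_of_forall_one_le_numRadius
    (hind : ∀ P : ContinuousMultilinearMap 𝕂 (fun _ : Fin k => X) X,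
      supNorm (polyEval P) = 1 → 1 ≤ numRadius 𝕂 (polyEval P))
    {x : X} (hx : x ∈ polyAttainPts 𝕂 X k) {x' : X →L[𝕂] 𝕂} (hx' : WeakStarExposed 𝕂 x') :
    ‖x' x‖ = 1 := by
  obtain ⟨hx1, L, hL, hLx⟩ := hx
  obtain ⟨hx'1, z, hz, hx'z, huniq⟩ := hx'
  have hz1 : ‖z‖ = 1 := (norm_eq_one_of_norm_apply_eq_one (𝕂 := 𝕂)
    (mem_closedBall_zero_iff.mp hz) hx'1 (by rw [hx'z, norm_one])).1
  obtain ⟨β, hβ, g, hg, hgz, hgw⟩ := exists_seq_norm_apply_tendsto_one hind hL hLx hz1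
  obtain ⟨c, hc, h2⟩ := exists_norm_add_smul_ge_two z (β • x) hg hgz hgw
  have hcw : ‖c • β • x‖ ≤ 1 := by
    rw [norm_smul, norm_smul, hc, hβ, one_mul, one_mul]
    exact mem_closedBall_zero_iff.mp hx1
  obtain ⟨y', hy', hy'z, hy'w⟩ := exists_apply_eq_one_of_two_le_norm_add (𝕂 := 𝕂) hz1.le hcw h2
  rw [huniq y' hy'.le hy'z, map_smul, map_smul, smul_eq_mul, smul_eq_mul] at hy'w
  simpa [hc, hβ] using congrArg norm hy'w

end Forward

section Reverse

variable {𝕂 X : Type*} [RCLike 𝕂] [NormedAddCommGroup X] [NormedSpace 𝕂 X] {k : ℕ}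

lemma exists_mem_polyAttainPts_norm_eq_supNorm
    {Q : ContinuousMultilinearMap 𝕂 (fun _ : Fin k => X) X} {x₀ : X}
    (hQ : StronglyAttains 𝕂 (polyEval Q) x₀) (hpos : 0 < supNorm (polyEval Q)) :
    ∃ x ∈ polyAttainPts 𝕂 X k, ‖polyEval Q x‖ = supNorm (polyEval Q) := by
  have hbQ := bddAbove_norm_polyEval Q
  obtain ⟨α, hα, hαx, hQα⟩ := hQ.exists_norm_eq_supNorm (continuous_polyEval Q) hbQ
  obtain ⟨y, hy, hyQ⟩ := exists_dual_vector 𝕂 (polyEval Q (α • x₀)) (hQα ▸ hpos.ne')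
  set q := y.compContinuousMultilinearMap Q
  have hq : ∀ x, ‖polyEval q x‖ ≤ ‖polyEval Q x‖ := fun x =>
    (y.le_opNorm _).trans_eq (by rw [hy, one_mul]; rfl)
  have hqα : ‖polyEval q (α • x₀)‖ = supNorm (polyEval Q) := by
    change ‖y (polyEval Q (α • x₀))‖ = _
    rw [hyQ, RCLike.norm_ofReal, abs_norm, hQα]
  have hsup : supNorm (polyEval q) = supNorm (polyEval Q) :=
    supNorm_eq_of_norm_eq (fun x hx => (hq x).trans (norm_le_supNorm hbQ hx)) hαx hqα
  refine ⟨α • x₀, ⟨hαx, q, fun h => ?_, (hQ.smul hα).of_norm_le hbQ (fun x _ => hq x) hsup⟩, hQα⟩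
  rw [h, Pi.zero_apply, norm_zero] at hqα
  exact hpos.ne hqα

lemma one_sub_three_mul_le_numRadius [CompleteSpace X] [TopologicalSpace.SeparableSpace X]
    (happrox : ∀ P : ContinuousMultilinearMap 𝕂 (fun _ : Fin k => X) X, ∀ ε > (0 : ℝ),
      ∃ (Q : ContinuousMultilinearMap 𝕂 (fun _ : Fin k => X) X) (x₀ : X),
        StronglyAttains 𝕂 (polyEval Q) x₀ ∧
          ∀ x ∈ closedBall (0 : X) 1, ‖polyEval P x - polyEval Q x‖ ≤ ε)
    (hyp : ∀ x ∈ polyAttainPts 𝕂 X k, ∀ x' : X →L[𝕂] 𝕂, WeakStarExposed 𝕂 x' → ‖x' x‖ = 1)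
    {P : ContinuousMultilinearMap 𝕂 (fun _ : Fin k => X) X} (hP : supNorm (polyEval P) = 1)
    {ε : ℝ} (hε : 0 < ε) (hε3 : ε < 1 / 3) : 1 - 3 * ε ≤ numRadius 𝕂 (polyEval P) := by
  obtain ⟨Q, x₀, hQ, hPQ⟩ := happrox P ε hε
  have hsupQ := hP ▸ supNorm_le_supNorm_add (bddAbove_norm_polyEval Q) hε.le hPQ
  obtain ⟨x, hx, hQx⟩ := exists_mem_polyAttainPts_norm_eq_supNorm hQ (by linarith)
  have hPx : 1 - 2 * ε ≤ ‖polyEval P x‖ := by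
    linarith [norm_sub_norm_le (polyEval Q x) (polyEval P x), norm_sub_rev (polyEval Q x)
      (polyEval P x), hPQ x hx.1]
  obtain ⟨x', hx', hx'P⟩ := exists_weakStarExposed_norm_apply_ge (𝕂 := 𝕂)
    (norm_pos_iff.mp (by linarith : 0 < ‖polyEval P x‖)) hε
  have := norm_apply_le_numRadius (bddAbove_norm_polyEval P) (mem_closedBall_zero_iff.mp hx.1)
    hx'.1 (hyp x hx x' hx')
  linarith

end Reverse

theorem statement8_general {𝕂 X : Type*} [RCLike 𝕂] [NormedAddCommGroup X] [NormedSpace 𝕂 X]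
    [CompleteSpace X] [Nontrivial X] [TopologicalSpace.SeparableSpace X]
    {k : ℕ}
    (happrox : ∀ P : ContinuousMultilinearMap 𝕂 (fun _ : Fin k => X) X, ∀ ε > (0 : ℝ),
      ∃ (Q : ContinuousMultilinearMap 𝕂 (fun _ : Fin k => X) X) (x₀ : X),
        StronglyAttains 𝕂 (polyEval Q) x₀ ∧
          ∀ x ∈ Metric.closedBall (0 : X) 1, ‖polyEval P x - polyEval Q x‖ ≤ ε) :
    polyNumIndex 𝕂 X k = 1 ↔
      ∀ x ∈ polyAttainPts 𝕂 X k, ∀ x' : X →L[𝕂] 𝕂,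
        WeakStarExposed 𝕂 x' → ‖x' x‖ = 1 := by
  rw [polyNumIndex_eq_one_iff]
  refine ⟨fun hind x hx x' hx' => norm_apply_eq_one_of_forall_one_le_numRadius hind hx hx',
    fun hyp P hP => ?_⟩
  have hlim : Tendsto (fun ε : ℝ => 1 - 3 * ε) (𝓝[>] 0) (𝓝 1) :=
    (Continuous.tendsto' (by fun_prop) 0 1 (by norm_num)).mono_left nhdsWithin_le_nhds
  refine le_of_tendsto hlim ?_
  filter_upwards [Ioo_mem_nhdsGT (by norm_num : (0 : ℝ) < 1 / 3)] with ε hε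
  exact one_sub_three_mul_le_numRadius happrox hyp hP hε.1 hε.2

/-- for a separable nontrivial Banach space in which strongly norm-attaining
polynomials are dense in `𝒫(ᵏX : X)`, `n^(k)(X) = 1` iff `|x*(x)| = 1` for every
`x ∈ ρ̃𝒫(ᵏX)` and every weak-* exposed point `x*` of `B_{X*}`. -/
theorem statement8 {𝕂 X : Type*} [RCLike 𝕂] [NormedAddCommGroup X] [NormedSpace 𝕂 X]
    [CompleteSpace X] [Nontrivial X] [TopologicalSpace.SeparableSpace X]
    {k : ℕ} (hk : 1 ≤ k)
    (happrox : ∀ P : ContinuousMultilinearMap 𝕂 (fun _ : Fin k => X) X, ∀ ε > (0 : ℝ),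
      ∃ (Q : ContinuousMultilinearMap 𝕂 (fun _ : Fin k => X) X) (x₀ : X),
        StronglyAttains 𝕂 (polyEval Q) x₀ ∧
          ∀ x ∈ Metric.closedBall (0 : X) 1, ‖polyEval P x - polyEval Q x‖ ≤ ε) :
    polyNumIndex 𝕂 X k = 1 ↔
      ∀ x ∈ polyAttainPts 𝕂 X k, ∀ x' : X →L[𝕂] 𝕂,
        WeakStarExposed 𝕂 x' → ‖x' x‖ = 1 :=
  statement8_general happrox
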